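/- arXiv:1108.6210 — 3 statements merged into one kernel-verified Lean document; each statement's English description precedes it below -/
import Mathlib

section
/- Let (A_i)ᵢ, (k_i)ᵢ, (A₀ᵢ)ᵢ be sequences of reals with A_i > 0, k_i > 0, A₀ᵢ > 0, and set 𝒜₀ᵢ = k_i√(A₀ᵢ). Suppose there is a constant C with k_i√(A_i) − 𝒜₀ᵢ = C for all i (discrete dead-man equilibrium). For each interface i+1/2 set Δ𝒜₀_{i+1/2} = 𝒜₀_{i+1} − 𝒜₀ᵢ, k*_{i+1/2} = max(k_i, k_{i+1}), and define the hydrostatic-type reconstructed areas by √(A_{i+1/2,L}) = max(k_i√(A_i) + min(Δ𝒜₀_{i+1/2}, 0), 0)/k*_{i+1/2} and √(A_{i+1/2,R}) = max(k_{i+1}√(A_{i+1}) − max(Δ𝒜₀_{i+1/2}, 0), 0)/k*_{i+1/2}. Then no truncation by the outer max occurs, k*_{i+1/2}√(A_{i+1/2,L}) = k*_{i+1/2}√(A_{i+1/2,R}) = min(k_i√(A_i), k_{i+1}√(A_{i+1})) > 0, and in particular A_{i+1/2,L} = A_{i+1/2,R} at every interface. -/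
open Real

/-- At a discrete dead-man equilibrium (`k_i√(A_i) − k_i√(A₀ᵢ)` constant), the
hydrostatic-type reconstruction never truncates, both reconstructed interface values
satisfy `k* √(A_{i+1/2,L}) = k* √(A_{i+1/2,R}) = min(k_i√(A_i), k_{i+1}√(A_{i+1})) > 0`,
and in particular `A_{i+1/2,L} = A_{i+1/2,R}` at every interface. -/
theorem hydrostatic_reconstruction_at_equilibrium
    (A k A₀ : ℤ → ℝ)
    (hApos : ∀ i, 0 < A i) (hkpos : ∀ i, 0 < k i) (hA₀pos : ∀ i, 0 < A₀ i)
    (𝒜₀ : ℤ → ℝ) (h𝒜₀ : ∀ i, 𝒜₀ i = k i * Real.sqrt (A₀ i))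
    (C : ℝ) (heq : ∀ i, k i * Real.sqrt (A i) - 𝒜₀ i = C)
    (Δ𝒜₀ kstar sqrtAL sqrtAR AL AR : ℤ → ℝ)
    (hΔ : ∀ i, Δ𝒜₀ i = 𝒜₀ (i + 1) - 𝒜₀ i)
    (hkstar : ∀ i, kstar i = max (k i) (k (i + 1)))
    (hL : ∀ i, sqrtAL i = max (k i * Real.sqrt (A i) + min (Δ𝒜₀ i) 0) 0 / kstar i)
    (hR : ∀ i, sqrtAR i = max (k (i + 1) * Real.sqrt (A (i + 1)) - max (Δ𝒜₀ i) 0) 0 / kstar i)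
    (hAL : ∀ i, AL i = (sqrtAL i) ^ 2) (hAR : ∀ i, AR i = (sqrtAR i) ^ 2) :
    ∀ i : ℤ,
      0 ≤ k i * Real.sqrt (A i) + min (Δ𝒜₀ i) 0 ∧
      0 ≤ k (i + 1) * Real.sqrt (A (i + 1)) - max (Δ𝒜₀ i) 0 ∧
      kstar i * sqrtAL i = min (k i * Real.sqrt (A i)) (k (i + 1) * Real.sqrt (A (i + 1))) ∧
      kstar i * sqrtAR i = min (k i * Real.sqrt (A i)) (k (i + 1) * Real.sqrt (A (i + 1))) ∧
      0 < min (k i * Real.sqrt (A i)) (k (i + 1) * Real.sqrt (A (i + 1))) ∧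
      AL i = AR i := by
  intro i
  set a := k i * Real.sqrt (A i) with ha
  set b := k (i + 1) * Real.sqrt (A (i + 1)) with hb
  have hapos : 0 < a := mul_pos (hkpos i) (Real.sqrt_pos.mpr (hApos i))
  have hbpos : 0 < b := mul_pos (hkpos (i + 1)) (Real.sqrt_pos.mpr (hApos (i + 1)))
  have hDelta : Δ𝒜₀ i = b - a := by
    have h1 := heq i
    have h2 := heq (i + 1)
    rw [hΔ]; linarith
  have hkstarpos : 0 < kstar i := by
    rw [hkstar]; exact lt_max_of_lt_left (hkpos i)
  have hmin : a + min (Δ𝒜₀ i) 0 = min a b := by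
    rw [hDelta]
    rcases le_total a b with h | h
    · simp [min_eq_right, sub_nonneg.mpr h, min_eq_left h]
    · rw [min_eq_left (by linarith), min_eq_right h]; ring
  have hmin' : b - max (Δ𝒜₀ i) 0 = min a b := by
    rw [hDelta]
    rcases le_total a b with h | h
    · rw [max_eq_left (by linarith), min_eq_left h]; ring
    · rw [max_eq_right (by linarith), min_eq_right h]; ring
  have hminpos : 0 < min a b := lt_min hapos hbpos
  have h1 : 0 ≤ a + min (Δ𝒜₀ i) 0 := by rw [hmin]; exact hminpos.le
  have h2 : 0 ≤ b - max (Δ𝒜₀ i) 0 := by rw [hmin']; exact hminpos.le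
  have hLval : sqrtAL i = min a b / kstar i := by
    rw [hL, max_eq_left h1, hmin]
  have hRval : sqrtAR i = min a b / kstar i := by
    rw [hR, max_eq_left h2, hmin']
  refine ⟨h1, h2, ?_, ?_, hminpos, ?_⟩
  · rw [hLval]; field_simp
  · rw [hRval]; field_simp
  · rw [hAL, hAR, hLval, hRval]
end

section
/- Let ρ > 0, Δt > 0, Δx > 0, and let (A_i)ᵢ, (k_i)ᵢ, (A₀ᵢ)ᵢ be sequences with A_i > 0, k_i > 0, A₀ᵢ > 0, 𝒜₀ᵢ = k_i√(A₀ᵢ), and suppose u_i = 0 for all i and there is a constant C with k_i√(A_i) − 𝒜₀ᵢ = C for all i. Define the reconstructed interface states U_{i+1/2,L} = (A_{i+1/2,L}, A_{i+1/2,L}·u_i), U_{i+1/2,R} = (A_{i+1/2,R}, A_{i+1/2,R}·u_{i+1}) via √(A_{i+1/2,L}) = max(k_i√(A_i) + min(Δ𝒜₀_{i+1/2},0), 0)/k*_{i+1/2}, √(A_{i+1/2,R}) = max(k_{i+1}√(A_{i+1}) − max(Δ𝒜₀_{i+1/2},0), 0)/k*_{i+1/2}, with Δ𝒜₀_{i+1/2}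 = 𝒜₀_{i+1} − 𝒜₀ᵢ and k*_{i+1/2} = max(k_i,k_{i+1}); let F_{i+1/2} = ℱ(U_{i+1/2,L}, U_{i+1/2,R}, k*_{i+1/2}) be the HLL flux; let 𝒫(A,k) = kA^{3/2}/(3ρ√π); and define the left/right interface fluxes F_{i+1/2,L} = F_{i+1/2} + (0, 𝒫(A_i,k_i) − 𝒫(A_{i+1/2,L},k*_{i+1/2})) and F_{i−1/2,R} = F_{i−1/2} + (0, 𝒫(A_i,k_i) − 𝒫(A_{i−1/2,R},k*_{i−1/2})). Then the scheme update U_i^{n+1} = U_i^n − (Δt/Δx)(F_{i+1/2,L} − F_{i−1/2,R}) satisfies U_i^{n+1} = U_i^n = (A_i, 0) for every i: the scheme is well-balanced, i.e. it preserves the discrete dead-man equilibrium exactly. -/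
open Real

/-- Flux of the 1D blood flow system with stiffness `k` and density `ρ`. -/
noncomputable def bloodFlux (ρ k : ℝ) (U : ℝ × ℝ) : ℝ × ℝ :=
  (U.2, U.2 ^ 2 / U.1 + k * U.1 ^ ((3 : ℝ) / 2) / (3 * Real.sqrt π * ρ))

/-- Wave speed `c = √(k√A/(2ρ√π))`. -/
noncomputable def waveSpeed (ρ k : ℝ) (A : ℝ) : ℝ :=
  Real.sqrt (k * Real.sqrt A / (2 * ρ * Real.sqrt π))

/-- Smallest characteristic speed `λ₁ = u − c` of a state `U = (A, Q)`. -/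
noncomputable def lambda1 (ρ k : ℝ) (U : ℝ × ℝ) : ℝ :=
  U.2 / U.1 - waveSpeed ρ k U.1

/-- Largest characteristic speed `λ₂ = u + c` of a state `U = (A, Q)`. -/
noncomputable def lambda2 (ρ k : ℝ) (U : ℝ × ℝ) : ℝ :=
  U.2 / U.1 + waveSpeed ρ k U.1

/-- HLL numerical flux of Harten, Lax and van Leer for the 1D blood flow system. -/
noncomputable def hllFlux (ρ kstar : ℝ) (UL UR : ℝ × ℝ) : ℝ × ℝ :=
  let c₁ := min (lambda1 ρ kstar UL) (lambda1 ρ kstar UR)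
  let c₂ := max (lambda2 ρ kstar UL) (lambda2 ρ kstar UR)
  if 0 ≤ c₁ then bloodFlux ρ kstar UL
  else if c₂ ≤ 0 then bloodFlux ρ kstar UR
  else ((c₂ / (c₂ - c₁)) • bloodFlux ρ kstar UL - (c₁ / (c₂ - c₁)) • bloodFlux ρ kstar UR)
        + ((c₁ * c₂) / (c₂ - c₁)) • (UR - UL)

/-- Pressure-type term `𝒫(A,k) = kA^{3/2}/(3ρ√π)` used in the source corrections. -/
noncomputable def Pterm (ρ A k : ℝ) : ℝ :=
  k * A ^ ((3 : ℝ) / 2) / (3 * ρ * Real.sqrt π)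

lemma hll_self (ρ ks : ℝ) (U : ℝ × ℝ) : hllFlux ρ ks U U = bloodFlux ρ ks U := by
  unfold hllFlux
  simp only [min_self, max_self]
  split_ifs with h1 h2
  · rfl
  · rfl
  · push_neg at h1 h2
    have hne : lambda2 ρ ks U - lambda1 ρ ks U ≠ 0 := by linarith
    rw [sub_self, smul_zero, add_zero, ← sub_smul, div_sub_div_same, div_self hne, one_smul]

/-- The well-balanced property: the finite volume scheme with hydrostatic-type
reconstruction, HLL flux and source corrections preserves the discrete dead-man
equilibrium (`u_i = 0` and `k_i√(A_i) − 𝒜₀ᵢ` constant) exactly. -/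
theorem scheme_preserves_dead_man_equilibrium
    (ρ Δt Δx : ℝ) (hρ : 0 < ρ) (hΔt : 0 < Δt) (hΔx : 0 < Δx)
    (A k A₀ u : ℤ → ℝ)
    (hApos : ∀ i, 0 < A i) (hkpos : ∀ i, 0 < k i) (hA₀pos : ∀ i, 0 < A₀ i)
    (hu : ∀ i, u i = 0)
    (𝒜₀ : ℤ → ℝ) (h𝒜₀ : ∀ i, 𝒜₀ i = k i * Real.sqrt (A₀ i))
    (C : ℝ) (heq : ∀ i, k i * Real.sqrt (A i) - 𝒜₀ i = C)
    (Δ𝒜₀ kstar sqrtAL sqrtAR AL AR : ℤ → ℝ)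
    (hΔ : ∀ i, Δ𝒜₀ i = 𝒜₀ (i + 1) - 𝒜₀ i)
    (hkstar : ∀ i, kstar i = max (k i) (k (i + 1)))
    (hL : ∀ i, sqrtAL i = max (k i * Real.sqrt (A i) + min (Δ𝒜₀ i) 0) 0 / kstar i)
    (hR : ∀ i, sqrtAR i = max (k (i + 1) * Real.sqrt (A (i + 1)) - max (Δ𝒜₀ i) 0) 0 / kstar i)
    (hAL : ∀ i, AL i = (sqrtAL i) ^ 2) (hAR : ∀ i, AR i = (sqrtAR i) ^ 2)
    (UL UR : ℤ → ℝ × ℝ)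
    (hUL : ∀ i, UL i = (AL i, AL i * u i))
    (hUR : ∀ i, UR i = (AR i, AR i * u (i + 1)))
    (Fnum FL FR : ℤ → ℝ × ℝ)
    (hFnum : ∀ i, Fnum i = hllFlux ρ (kstar i) (UL i) (UR i))
    (hFL : ∀ i, FL i = Fnum i + (0, Pterm ρ (A i) (k i) - Pterm ρ (AL i) (kstar i)))
    (hFR : ∀ i, FR i = Fnum (i - 1) +
      (0, Pterm ρ (A i) (k i) - Pterm ρ (AR (i - 1)) (kstar (i - 1))))
    (Unew : ℤ → ℝ × ℝ)
    (hUnew : ∀ i, Unew i = (A i, A i * u i) - (Δt / Δx) • (FL i - FR i)) :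
    ∀ i : ℤ, Unew i = (A i, A i * u i) ∧ Unew i = (A i, 0) := by
  intro i
  have hALR : ∀ j : ℤ, AL j = AR j := by
    intro j
    have e1 : k j * Real.sqrt (A j) = C + 𝒜₀ j := by have := heq j; linarith
    have e2 : k (j+1) * Real.sqrt (A (j+1)) = C + 𝒜₀ (j+1) := by have := heq (j+1); linarith
    have key : max (k j * Real.sqrt (A j) + min (Δ𝒜₀ j) 0) 0
        = max (k (j+1) * Real.sqrt (A (j+1)) - max (Δ𝒜₀ j) 0) 0 := by
      rw [e1, e2, hΔ j]
      rcases le_total (𝒜₀ (j+1) - 𝒜₀ j) 0 with h | h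
      · rw [min_eq_left h, max_eq_right h]; congr 1; ring
      · rw [min_eq_right h, max_eq_left h]; congr 1; ring
    rw [hAL, hAR, hL, hR, key]
  have hFnumval : ∀ j : ℤ, Fnum j = (0, Pterm ρ (AL j) (kstar j)) := by
    intro j
    have hULR : UL j = UR j := by
      rw [hUL, hUR, hu j, hu (j+1), hALR j]
    rw [hFnum, hULR, hll_self, hUR, hu (j+1), mul_zero, ← hALR j]
    unfold bloodFlux Pterm
    simp only [Prod.mk.injEq]
    refine ⟨trivial, ?_⟩
    norm_num; ring
  have hFLval : FL i = (0, Pterm ρ (A i) (k i)) := by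
    rw [hFL, hFnumval i, Prod.mk_add_mk]
    norm_num
  have hFRval : FR i = (0, Pterm ρ (A i) (k i)) := by
    rw [hFR, hFnumval (i-1), hALR (i-1), Prod.mk_add_mk]
    norm_num
  have h0 : Unew i = (A i, A i * u i) := by
    rw [hUnew, hFLval, hFRval, sub_self, smul_zero, sub_zero]
  exact ⟨h0, by rw [h0, hu i, mul_zero]⟩
end

section
/- Let (A_i)ᵢ, (k_i)ᵢ, (A₀ᵢ)ᵢ be arbitrary sequences of reals with k_i > 0, set 𝒜₀ᵢ = k_i√(A₀ᵢ), Δ𝒜₀_{i+1/2} = 𝒜₀_{i+1} − 𝒜₀ᵢ, k*_{i+1/2} = max(k_i, k_{i+1}), and define the reconstructed areas by √(A_{i+1/2,L}) = max(k_i√(A_i) + min(Δ𝒜₀_{i+1/2},0), 0)/k*_{i+1/2} and √(A_{i+1/2,R}) = max(k_{i+1}√(A_{i+1}) − max(Δ𝒜₀_{i+1/2},0), 0)/k*_{i+1/2}. Then the reconstruction is positivity preserving and consistent: (i) A_{i+1/2,L} ≥ 0 and A_{i+1/2,R} ≥ 0 always; (ii) if k_i = k_{i+1} and A₀ᵢ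 = A₀_{i+1} and A_i ≥ 0, A_{i+1} ≥ 0, then A_{i+1/2,L} = A_i and A_{i+1/2,R} = A_{i+1}. -/
open Real

/-- The hydrostatic-type reconstruction is positivity preserving and consistent:
the reconstructed areas are always nonnegative, and when the stiffness and the
cross-section at rest do not jump across the interface, the reconstruction returns
the cell values. -/
theorem hydrostatic_reconstruction_positive_and_consistent
    (A k A₀ : ℤ → ℝ) (hkpos : ∀ i, 0 < k i)
    (𝒜₀ : ℤ → ℝ) (h𝒜₀ : ∀ i, 𝒜₀ i = k i * Real.sqrt (A₀ i))
    (Δ𝒜₀ kstar sqrtAL sqrtAR AL AR : ℤ → ℝ)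
    (hΔ : ∀ i, Δ𝒜₀ i = 𝒜₀ (i + 1) - 𝒜₀ i)
    (hkstar : ∀ i, kstar i = max (k i) (k (i + 1)))
    (hL : ∀ i, sqrtAL i = max (k i * Real.sqrt (A i) + min (Δ𝒜₀ i) 0) 0 / kstar i)
    (hR : ∀ i, sqrtAR i = max (k (i + 1) * Real.sqrt (A (i + 1)) - max (Δ𝒜₀ i) 0) 0 / kstar i)
    (hAL : ∀ i, AL i = (sqrtAL i) ^ 2) (hAR : ∀ i, AR i = (sqrtAR i) ^ 2) :
    (∀ i : ℤ, 0 ≤ AL i ∧ 0 ≤ AR i) ∧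
    (∀ i : ℤ, k i = k (i + 1) → A₀ i = A₀ (i + 1) → 0 ≤ A i → 0 ≤ A (i + 1) →
      AL i = A i ∧ AR i = A (i + 1)) := by
  refine ⟨fun i => ⟨by rw [hAL]; positivity, by rw [hAR]; positivity⟩, fun i hk hA0 hAi hAi1 => ?_⟩
  have hΔ0 : Δ𝒜₀ i = 0 := by rw [hΔ, h𝒜₀, h𝒜₀, ← hk, ← hA0]; ring
  have hks : kstar i = k i := by rw [hkstar, ← hk, max_self]
  have hkne : k i ≠ 0 := (hkpos i).ne'
  constructor
  · rw [hAL, hL, hΔ0, min_self, add_zero, hks,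
      max_eq_left (mul_nonneg (hkpos i).le (Real.sqrt_nonneg _)), mul_div_cancel_left₀ _ hkne, sq_sqrt hAi]
  · rw [hAR, hR, hΔ0, max_self, sub_zero, hks, ← hk,
      max_eq_left (mul_nonneg (hkpos i).le (Real.sqrt_nonneg _)), mul_div_cancel_left₀ _ hkne, sq_sqrt hAi1]
end
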